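/- arXiv:1403.4197 — 4 statements merged into one kernel-verified Lean document; each statement's English description precedes it below -/
import Mathlib

section
/- Let q be a positive definite quadratic form on ℝⁿ (n ≥ 2) which is at most Q-distorted for some Q ≥ 1, and let q₀ be the restriction of q to an arbitrary hyperplane H ⊂ ℝⁿ. Then |q| ≥ (1/Q)·|q₀|^{n/(n−1)}. -/
/-!
Complete the orthonormal image of `ℝⁿ⁻¹` by a unit normal `v` of the hyperplane. In the resulting
orthonormal basis `A` becomes a block matrix with top-left block `q₀`, so
`|q| = |q₀| · s` with `s` the Schur complement. Now `s = q(y)` for a vector `y = v - h`, `h ∈ H`,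
hence `|y| ≥ 1` and `s ≥ σ₁`. On the other hand every eigenvalue of `q₀` is at most
`σ₂ ≤ Q σ₁`, so `|q₀|^{1/(n-1)} ≤ Q σ₁`, and
`|q₀|^{n/(n-1)} ≤ |q₀| · Q σ₁ ≤ Q |q|`.
-/

open Matrix

namespace Matrix

variable {ι : Type*} [Fintype ι] [DecidableEq ι]

section Rayleigh

variable {S : Matrix ι ι ℝ}

lemma IsHermitian.eigenvalues_eq_dotProduct_mulVec (hS : S.IsHermitian) (i : ι) :
    hS.eigenvalues i = ⇑(hS.eigenvectorBasis i) ⬝ᵥ (S *ᵥ ⇑(hS.eigenvectorBasis i)) := by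
  simpa using hS.eigenvalues_eq i

lemma IsHermitian.dotProduct_eigenvectorBasis_self (hS : S.IsHermitian) (i : ι) :
    ⇑(hS.eigenvectorBasis i) ⬝ᵥ ⇑(hS.eigenvectorBasis i) = 1 := by
  have h := real_inner_self_eq_norm_sq (hS.eigenvectorBasis i)
  rw [hS.eigenvectorBasis.orthonormal.1 i, one_pow, EuclideanSpace.inner_eq_star_dotProduct] at h
  simpa using h

lemma PosSemidef.det_le_pow_card {c : ℝ} (hS : S.PosSemidef)
    (h : ∀ u, u ⬝ᵥ (S *ᵥ u) ≤ c * (u ⬝ᵥ u)) : S.det ≤ c ^ Fintype.card ι := by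
  rw [hS.isHermitian.det_eq_prod_eigenvalues, ← Finset.card_univ, ← Finset.prod_const]
  refine Finset.prod_le_prod (fun i _ => by simpa using hS.eigenvalues_nonneg i) fun i _ => ?_
  simpa [← hS.isHermitian.eigenvalues_eq_dotProduct_mulVec,
    hS.isHermitian.dotProduct_eigenvectorBasis_self] using h (hS.isHermitian.eigenvectorBasis i)

lemma IsHermitian.pow_card_le_det {c : ℝ} (hS : S.IsHermitian) (hc : 0 ≤ c)
    (h : ∀ u, c * (u ⬝ᵥ u) ≤ u ⬝ᵥ (S *ᵥ u)) : c ^ Fintype.card ι ≤ S.det := by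
  rw [hS.det_eq_prod_eigenvalues, ← Finset.card_univ, ← Finset.prod_const]
  refine Finset.prod_le_prod (fun _ _ => hc) fun i _ => ?_
  simpa [← hS.eigenvalues_eq_dotProduct_mulVec, hS.dotProduct_eigenvectorBasis_self] using
    h (hS.eigenvectorBasis i)

end Rayleigh

variable {κ : Type*} [Fintype κ]

/-- The form of the Schur complement at `y` is the form of the block matrix at
`(-B⁻¹ C y, y)`, a vector at least as long as `y`. -/
lemma le_dotProduct_schur_complement {B : Matrix ι ι ℝ} (hB : B.PosDef) [Invertible B]
    (C : Matrix ι κ ℝ) (D : Matrix κ κ ℝ) {σ : ℝ} (hσ : 0 ≤ σ)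
    (h : ∀ u, σ * (u ⬝ᵥ u) ≤ u ⬝ᵥ (fromBlocks B C Cᵀ D *ᵥ u)) (y : κ → ℝ) :
    σ * (y ⬝ᵥ y) ≤ y ⬝ᵥ ((D - Cᵀ * B⁻¹ * C) *ᵥ y) := by
  have hy := h (Sum.elim (-((B⁻¹ * C) *ᵥ y)) y)
  rw [dotProduct_mulVec, ← conjTranspose_eq_transpose_of_trivial] at hy
  have := schur_complement_eq₁₁ C D (-((B⁻¹ * C) *ᵥ y)) y hB.1
  simp only [star_trivial, neg_add_cancel, zero_vecMul, zero_dotProduct, zero_add] at this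
  rw [this, sumElim_dotProduct_sumElim, ← dotProduct_mulVec,
    conjTranspose_eq_transpose_of_trivial] at hy
  have hx : 0 ≤ -((B⁻¹ * C) *ᵥ y) ⬝ᵥ -((B⁻¹ * C) *ᵥ y) := by
    simpa using dotProduct_self_star_nonneg (-((B⁻¹ * C) *ᵥ y))
  nlinarith

lemma pow_card_mul_det_le_det_fromBlocks [DecidableEq κ] {B : Matrix ι ι ℝ} (hB : B.PosDef)
    (C : Matrix ι κ ℝ) {D : Matrix κ κ ℝ} (hD : D.IsHermitian) {σ : ℝ} (hσ : 0 ≤ σ)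
    (h : ∀ u, σ * (u ⬝ᵥ u) ≤ u ⬝ᵥ (fromBlocks B C Cᵀ D *ᵥ u)) :
    σ ^ Fintype.card κ * B.det ≤ (fromBlocks B C Cᵀ D).det := by
  have := hB.isUnit.invertible
  have hS : (D - Cᵀ * B⁻¹ * C).IsHermitian := by
    rw [← conjTranspose_eq_transpose_of_trivial]
    exact hD.sub (isHermitian_conjTranspose_mul_mul C hB.1.inv)
  rw [det_fromBlocks₁₁, invOf_eq_nonsing_inv, mul_comm]
  gcongr
  · exact hB.det_pos.le
  · exact hS.pow_card_le_det hσ (le_dotProduct_schur_complement hB C D hσ h)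

section Conjugation

variable {m k R : Type*} [Fintype m] [Fintype k] [CommRing R]

lemma dotProduct_transpose_mul_mul_mulVec (G : Matrix m k R) (A : Matrix m m R) (x y : k → R) :
    x ⬝ᵥ ((Gᵀ * A * G) *ᵥ y) = (G *ᵥ x) ⬝ᵥ (A *ᵥ (G *ᵥ y)) := by
  rw [← mulVec_mulVec, ← mulVec_mulVec, dotProduct_mulVec, vecMul_transpose]

lemma transpose_toMatrix'_mul_mul_toMatrix'_apply [DecidableEq k] (f : (k → R) →ₗ[R] m → R)
    (A : Matrix m m R) (i j : k) :
    ((LinearMap.toMatrix' f)ᵀ * A * LinearMap.toMatrix' f) i j =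
      f (Pi.single i 1) ⬝ᵥ (A *ᵥ f (Pi.single j 1)) := by
  have := dotProduct_transpose_mul_mul_mulVec (LinearMap.toMatrix' f) A
    (Pi.single i 1) (Pi.single j 1)
  rwa [LinearMap.toMatrix'_mulVec, LinearMap.toMatrix'_mulVec, single_dotProduct,
    mulVec_single_one, one_mul] at this

lemma transpose_toMatrix'_mul_toMatrix' [DecidableEq m] [DecidableEq k]
    {f : (k → R) →ₗ[R] m → R} (hf : ∀ x y, f x ⬝ᵥ f y = x ⬝ᵥ y) :
    (LinearMap.toMatrix' f)ᵀ * LinearMap.toMatrix' f = 1 := by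
  ext i j
  simpa [hf, one_apply, Pi.single_apply, eq_comm] using
    transpose_toMatrix'_mul_mul_toMatrix'_apply f 1 i j

lemma dotProduct_mulVec_self_of_transpose_mul_self_eq_one [DecidableEq m] [DecidableEq k]
    {G : Matrix m k R} (hG : Gᵀ * G = 1) (u : k → R) : (G *ᵥ u) ⬝ᵥ (G *ᵥ u) = u ⬝ᵥ u := by
  simpa [hG] using (dotProduct_transpose_mul_mul_mulVec G 1 u u).symm

lemma det_transpose_mul_mul_of_transpose_mul_self_eq_one [DecidableEq m] [DecidableEq k]
    (hcard : Fintype.card k = Fintype.card m) {G : Matrix m k R} (hG : Gᵀ * G = 1)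
    (A : Matrix m m R) : (Gᵀ * A * G).det = A.det := by
  let e := Fintype.equivOfCardEq hcard
  let G' : Matrix m m R := G.submatrix id e.symm
  have hconj (X : Matrix m m R) : (Gᵀ * X * G).submatrix e.symm e.symm = G'ᵀ * X * G' := by
    simp [G', transpose_submatrix, submatrix_mul _ _ _ id _ Function.bijective_id]
  have hdet : G'.det * G'.det = 1 := by
    simpa [det_mul, hG, eq_comm] using congrArg det (hconj 1)
  calc (Gᵀ * A * G).det = ((Gᵀ * A * G).submatrix e.symm e.symm).det :=
        (det_submatrix_equiv_self e.symm _).symm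
    _ = A.det := by
      rw [hconj, det_mul, det_mul, det_transpose]; linear_combination A.det * hdet

end Conjugation

variable {m ι κ : Type*} [Fintype m] [Fintype ι] [Fintype κ]

lemma PosSemidef.transpose_mul_mul_same {A : Matrix m m ℝ} (hA : A.PosSemidef)
    (F : Matrix m ι ℝ) : (Fᵀ * A * F).PosSemidef := by
  simpa [conjTranspose_eq_transpose_of_trivial] using hA.conjTranspose_mul_mul_same F

lemma det_transpose_mul_mul_le_pow_card [DecidableEq m] [DecidableEq ι] {A : Matrix m m ℝ}
    (hA : A.PosSemidef) {F : Matrix m ι ℝ} (hF : Fᵀ * F = 1) {c : ℝ}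
    (h : ∀ u, u ⬝ᵥ (A *ᵥ u) ≤ c * (u ⬝ᵥ u)) : (Fᵀ * A * F).det ≤ c ^ Fintype.card ι := by
  refine (hA.transpose_mul_mul_same F).det_le_pow_card fun u => ?_
  rw [dotProduct_transpose_mul_mul_mulVec,
    ← dotProduct_mulVec_self_of_transpose_mul_self_eq_one hF u]
  exact h _

lemma pow_card_mul_det_transpose_mul_mul_le_det [DecidableEq m] [DecidableEq ι] [DecidableEq κ]
    {A : Matrix m m ℝ} (hA : A.PosDef) {F : Matrix m ι ℝ} {E : Matrix m κ ℝ}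
    (hcard : Fintype.card (ι ⊕ κ) = Fintype.card m)
    (hG : (fromCols F E)ᵀ * fromCols F E = 1) {σ : ℝ} (hσ : 0 ≤ σ)
    (h : ∀ u, σ * (u ⬝ᵥ u) ≤ u ⬝ᵥ (A *ᵥ u)) :
    σ ^ Fintype.card κ * (Fᵀ * A * F).det ≤ A.det := by
  have hAt : Aᵀ = A := by simpa [conjTranspose_eq_transpose_of_trivial] using hA.1.eq
  have hblocks : (fromCols F E)ᵀ * A * fromCols F E =
      fromBlocks (Fᵀ * A * F) (Fᵀ * A * E) (Fᵀ * A * E)ᵀ (Eᵀ * A * E) := by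
    simp [transpose_fromCols, fromRows_mul, transpose_mul, hAt, Matrix.mul_assoc]
  have hFF : Fᵀ * F = 1 := by
    rw [transpose_fromCols, fromRows_mul_fromCols, ← fromBlocks_one] at hG
    exact (fromBlocks_inj.mp hG).1
  have hFinj : Function.Injective F.mulVec := fun x y hxy => by
    simpa [hFF] using congrArg (Fᵀ *ᵥ ·) hxy
  rw [← det_transpose_mul_mul_of_transpose_mul_self_eq_one hcard hG A, hblocks]
  refine pow_card_mul_det_le_det_fromBlocks ?_ _ ?_ hσ fun u => ?_
  · simpa [conjTranspose_eq_transpose_of_trivial] using hA.conjTranspose_mul_mul_same hFinj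
  · exact (hA.posSemidef.transpose_mul_mul_same E).isHermitian
  · rw [← hblocks, dotProduct_transpose_mul_mul_mulVec,
      ← dotProduct_mulVec_self_of_transpose_mul_self_eq_one hG]
    exact h _

lemma exists_dotProduct_self_eq_one_vecMul_eq_zero (F : Matrix m ι ℝ)
    (hcard : Fintype.card ι < Fintype.card m) : ∃ v : m → ℝ, v ⬝ᵥ v = 1 ∧ v ᵥ* F = 0 := by
  obtain ⟨w, hw, hw0⟩ := Submodule.exists_mem_ne_zero_of_ne_bot
    (LinearMap.ker_ne_bot_of_finrank_lt (f := (Fᵀ).mulVecLin) (by simpa using hcard))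
  have hpos : 0 < w ⬝ᵥ w := by simpa using dotProduct_self_star_pos_iff.mpr hw0
  refine ⟨(√(w ⬝ᵥ w))⁻¹ • w, ?_, ?_⟩
  · rw [smul_dotProduct, dotProduct_smul, smul_smul, smul_eq_mul, ← sq, inv_pow,
      Real.sq_sqrt hpos.le, inv_mul_cancel₀ hpos.ne']
  · rw [smul_vecMul, ← mulVec_transpose, show Fᵀ *ᵥ w = 0 from hw, smul_zero]

lemma mul_det_transpose_mul_mul_le_det [DecidableEq m] [DecidableEq ι] {A : Matrix m m ℝ}
    (hA : A.PosDef) {F : Matrix m ι ℝ} (hF : Fᵀ * F = 1)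
    (hcard : Fintype.card ι + 1 = Fintype.card m) {σ : ℝ} (hσ : 0 ≤ σ)
    (h : ∀ u, σ * (u ⬝ᵥ u) ≤ u ⬝ᵥ (A *ᵥ u)) : σ * (Fᵀ * A * F).det ≤ A.det := by
  obtain ⟨v, hv, hvF⟩ := exists_dotProduct_self_eq_one_vecMul_eq_zero F (by omega)
  have hG : (fromCols F (replicateCol Unit v))ᵀ * fromCols F (replicateCol Unit v) = 1 := by
    rw [transpose_fromCols, fromRows_mul_fromCols, ← fromBlocks_one, fromBlocks_inj]
    refine ⟨hF, ?_, ?_, ?_⟩ <;> ext i j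
    · simpa [mul_apply, vecMul, dotProduct, mul_comm] using congrFun hvF i
    · simpa [mul_apply, vecMul, dotProduct] using congrFun hvF j
    · simpa [mul_apply, dotProduct] using hv
  simpa using pow_card_mul_det_transpose_mul_mul_le_det hA (by simpa using hcard) hG hσ h

end Matrix

lemma Real.rpow_div_sub_one_le_mul_of_le_pow {b s : ℝ} {n : ℕ} (hn : 2 ≤ n) (hb : 0 ≤ b)
    (hs : 0 ≤ s) (h : b ≤ s ^ (n - 1)) : b ^ ((n : ℝ) / ((n : ℝ) - 1)) ≤ b * s := by
  have hn' : ((n - 1 : ℕ) : ℝ) = (n : ℝ) - 1 := by rw [Nat.cast_sub (by omega), Nat.cast_one]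
  have hpos : (0 : ℝ) < (n : ℝ) - 1 := by rw [← hn']; exact_mod_cast (by omega : 0 < n - 1)
  rw [show (n : ℝ) / ((n : ℝ) - 1) = 1 + 1 / ((n : ℝ) - 1) by field_simp; ring,
    Real.rpow_add' hb (by positivity), Real.rpow_one]
  gcongr
  calc b ^ (1 / ((n : ℝ) - 1)) ≤ (s ^ (n - 1)) ^ (1 / ((n : ℝ) - 1)) := by gcongr
    _ = s := by rw [one_div, ← hn', Real.pow_rpow_inv_natCast hs (by omega)]

/-- Lemma (volume of ellipsoids and hyperplanes), second inequality.
`q` is a positive definite quadratic form on `ℝⁿ` (`n ≥ 2`), represented by the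
positive definite symmetric matrix `A` (so `q(u) = u ⬝ᵥ A *ᵥ u`), which is at most
`Q`-distorted: its largest eigenvalue `σ₂` (the least constant with
`q(u,u) ≤ σ₂·⟨u,u⟩`) satisfies `σ₂ ≤ Q·σ₁` where `σ₁` is its smallest eigenvalue
(the greatest constant with `σ₁·⟨u,u⟩ ≤ q(u,u)`).  The hyperplane `H` is
represented as the range of a linear map `f : ℝ^{n-1} → ℝⁿ` preserving the inner
product, and the matrix of the restriction `q₀` of `q` to `H` in the orthonormal
basis `(f eᵢ)` has entries `f eᵢ ⬝ᵥ A *ᵥ f eⱼ`.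
Then `|q| ≥ (1/Q) · |q₀|^{n/(n-1)}`. -/
theorem det_ge_inv_Q_mul_det_restrict_rpow
    (n : ℕ) (hn : 2 ≤ n)
    (A : Matrix (Fin n) (Fin n) ℝ) (hA : A.PosDef)
    (Q σ₁ σ₂ : ℝ) (hQ : 1 ≤ Q)
    (hσ₁ : IsGreatest {c : ℝ | ∀ u : Fin n → ℝ, c * (u ⬝ᵥ u) ≤ u ⬝ᵥ (A *ᵥ u)} σ₁)
    (hσ₂ : IsLeast {c : ℝ | ∀ u : Fin n → ℝ, u ⬝ᵥ (A *ᵥ u) ≤ c * (u ⬝ᵥ u)} σ₂)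
    (hdist : σ₂ ≤ Q * σ₁)
    (f : (Fin (n - 1) → ℝ) →ₗ[ℝ] (Fin n → ℝ))
    (hf : ∀ x y : Fin (n - 1) → ℝ, (f x) ⬝ᵥ (f y) = x ⬝ᵥ y) :
    A.det ≥
      (1 / Q) * (Matrix.of (fun i j : Fin (n - 1) =>
        (f (Pi.single i 1)) ⬝ᵥ (A *ᵥ f (Pi.single j 1)))).det ^ ((n : ℝ) / ((n : ℝ) - 1)) := by
  set F := LinearMap.toMatrix' f
  have hFF : Fᵀ * F = 1 := transpose_toMatrix'_mul_toMatrix' hf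
  have hB : Matrix.of (fun i j : Fin (n - 1) => (f (Pi.single i 1)) ⬝ᵥ (A *ᵥ f (Pi.single j 1)))
      = Fᵀ * A * F := by
    ext i j
    rw [of_apply, transpose_toMatrix'_mul_mul_toMatrix'_apply]
  have hσ₁_nonneg : 0 ≤ σ₁ := hσ₁.2 fun u => by simpa using hA.posSemidef.dotProduct_mulVec_nonneg u
  have hdetB : (Fᵀ * A * F).det ≤ (Q * σ₁) ^ (n - 1) := by
    simpa using det_transpose_mul_mul_le_pow_card hA.posSemidef hFF fun u =>
      (hσ₂.1 u).trans (mul_le_mul_of_nonneg_right hdist (dotProduct_self_star_nonneg u))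
  have hdetA : σ₁ * (Fᵀ * A * F).det ≤ A.det :=
    mul_det_transpose_mul_mul_le_det hA hFF (by simp only [Fintype.card_fin]; omega) hσ₁_nonneg hσ₁.1
  have hQ₀ : 0 < Q := by linarith
  rw [hB, ge_iff_le]
  calc 1 / Q * (Fᵀ * A * F).det ^ ((n : ℝ) / ((n : ℝ) - 1))
      ≤ 1 / Q * ((Fᵀ * A * F).det * (Q * σ₁)) := by
        gcongr
        exact Real.rpow_div_sub_one_le_mul_of_le_pow hn
          (hA.posSemidef.transpose_mul_mul_same F).det_nonneg (by positivity) hdetB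
    _ = σ₁ * (Fᵀ * A * F).det := by field_simp
    _ ≤ A.det := hdetA
end

section
/- Let ρ, κ ∈ ℝ and σ > 0, and define R(t) = 2·arctan_κ(σ·tan_ρ(t/2)). Then for every t > 0 such that t < π/√ρ when ρ > 0 and such that σ·tan_ρ(t/2) < 1/√(−κ) when κ < 0, the function R is differentiable at t and satisfies R′(t) = sin_κ(R(t))/sin_ρ(t); moreover R(t)/t → σ as t → 0⁺. (Thus R is the distance function of the conformal azimuthal map from a ball in the model space of curvature ρ to the model space of curvature κ with radial derivative σ at the center.) -/
open Real MeasureTheory Filter Asymptotics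

/-- Inverse hyperbolic tangent. -/
noncomputable def artanh (y : ℝ) : ℝ := Real.log ((1 + y) / (1 - y)) / 2

/-- The generalized sine function `sin_κ`. -/
noncomputable def sinK (κ t : ℝ) : ℝ :=
  if 0 < κ then Real.sin (Real.sqrt κ * t) / Real.sqrt κ
  else if κ < 0 then Real.sinh (Real.sqrt (-κ) * t) / Real.sqrt (-κ)
  else t

/-- The generalized cosine function `cos_κ = sin_κ'`. -/
noncomputable def cosK (κ t : ℝ) : ℝ :=
  if 0 < κ then Real.cos (Real.sqrt κ * t)
  else if κ < 0 then Real.cosh (Real.sqrt (-κ) * t)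
  else 1

/-- The generalized tangent function `tan_κ`. -/
noncomputable def tanK (κ t : ℝ) : ℝ := sinK κ t / cosK κ t

/-- The inverse function `arctan_κ` of `tan_κ`. -/
noncomputable def arctanK (κ x : ℝ) : ℝ :=
  if 0 < κ then Real.arctan (Real.sqrt κ * x) / Real.sqrt κ
  else if κ < 0 then _root_.artanh (Real.sqrt (-κ) * x) / Real.sqrt (-κ)
  else x

/-- `ω_{n-1}`, the (n-1)-volume of the unit sphere of ℝⁿ, i.e. `n` times the
volume of the unit ball. -/
noncomputable def omegaS (n : ℕ) : ℝ :=
  n * (volume (Metric.ball (0 : EuclideanSpace ℝ (Fin n)) 1)).toReal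

/-- `A_κ(t)`: the volume of a geodesic sphere of radius `t` in the model space. -/
noncomputable def AK (n : ℕ) (κ t : ℝ) : ℝ := omegaS n * sinK κ t ^ (n - 1)

/-- `V_κ(t)`: the volume of a geodesic ball of radius `t` in the model space. -/
noncomputable def VK (n : ℕ) (κ t : ℝ) : ℝ := omegaS n * ∫ s in (0:ℝ)..t, sinK κ s ^ (n - 1)

/-- The natural domain of `V_κ`: `[0, π/√κ)` when `κ > 0` and `[0, ∞)` otherwise. -/
noncomputable def domK (κ : ℝ) : Set ℝ :=
  if 0 < κ then Set.Ico 0 (Real.pi / Real.sqrt κ) else Set.Ici 0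

/-- The range of `V_κ` (on its natural domain). -/
noncomputable def rangeVK (n : ℕ) (κ : ℝ) : Set ℝ := VK n κ '' domK κ

/-- The inverse of `V_κ` on its natural domain. -/
noncomputable def VKinv (n : ℕ) (κ v : ℝ) : ℝ := sInf {t : ℝ | t ∈ domK κ ∧ VK n κ t = v}

/-- The isoperimetric profile `I_κ = A_κ ∘ V_κ⁻¹` of the model space. -/
noncomputable def IK (n : ℕ) (κ v : ℝ) : ℝ := AK n κ (VKinv n κ v)

/-!
With `u = tan_ρ(t/2)` and `x = σu`, the double-angle formula
`sin_κ(2s) = 2 tan_κ s / (1 + κ tan_κ² s)` gives `sin_ρ t = 2u / (1 + ρu²)` and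
`sin_κ(R t) = 2x / (1 + κx²)`, while the chain rule with `tan_κ' = 1 + κ tan_κ²` and
`arctan_κ' x = 1 / (1 + κx²)` gives `R'(t) = σ(1 + ρu²) / (1 + κx²)`, which is the quotient
of the two. At `t = 0` the same formula gives `R'(0) = σ`, and `R 0 = 0`.
-/

section ModelTrigonometry

variable {κ : ℝ}

lemma sinK_zero (κ : ℝ) : sinK κ 0 = 0 := by
  unfold sinK; split_ifs <;> simp

lemma cosK_zero (κ : ℝ) : cosK κ 0 = 1 := by
  unfold cosK; split_ifs <;> simp

lemma tanK_zero (κ : ℝ) : tanK κ 0 = 0 := by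
  simp [tanK, sinK_zero]

lemma arctanK_zero (κ : ℝ) : arctanK κ 0 = 0 := by
  unfold arctanK _root_.artanh; split_ifs <;> simp

lemma hasDerivAt_sinK (κ t : ℝ) : HasDerivAt (sinK κ) (cosK κ t) t := by
  unfold sinK cosK
  split_ifs with hpos hneg
  · have hs : √κ ≠ 0 := (Real.sqrt_pos.mpr hpos).ne'
    exact (((hasDerivAt_id' t).const_mul √κ).sin.div_const √κ).congr_deriv (by field_simp)
  · have hs : √(-κ) ≠ 0 := (Real.sqrt_pos.mpr (neg_pos.mpr hneg)).ne'
    exact (((hasDerivAt_id' t).const_mul √(-κ)).sinh.div_const √(-κ)).congr_deriv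
      (by field_simp)
  · exact hasDerivAt_id t

lemma hasDerivAt_cosK (κ t : ℝ) : HasDerivAt (cosK κ) (-(κ * sinK κ t)) t := by
  unfold sinK cosK
  split_ifs with hpos hneg
  · have hs : √κ ≠ 0 := (Real.sqrt_pos.mpr hpos).ne'
    refine ((hasDerivAt_id' t).const_mul √κ).cos.congr_deriv ?_
    field_simp
    rw [Real.sq_sqrt hpos.le]
    ring
  · have hs : √(-κ) ≠ 0 := (Real.sqrt_pos.mpr (neg_pos.mpr hneg)).ne'
    refine ((hasDerivAt_id' t).const_mul √(-κ)).cosh.congr_deriv ?_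
    field_simp
    rw [Real.sq_sqrt (neg_pos.mpr hneg).le]
    ring
  · obtain rfl : κ = 0 := by linarith [not_lt.mp hpos, not_lt.mp hneg]
    simpa using hasDerivAt_const t (1 : ℝ)

lemma cosK_sq_add_mul_sinK_sq (κ t : ℝ) : cosK κ t ^ 2 + κ * sinK κ t ^ 2 = 1 := by
  unfold sinK cosK
  split_ifs with hpos hneg
  · have hs : √κ ≠ 0 := (Real.sqrt_pos.mpr hpos).ne'
    field_simp
    rw [Real.sq_sqrt hpos.le]
    linear_combination κ * Real.cos_sq_add_sin_sq (√κ * t)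
  · have hs : √(-κ) ≠ 0 := (Real.sqrt_pos.mpr (neg_pos.mpr hneg)).ne'
    field_simp
    rw [Real.sq_sqrt (neg_pos.mpr hneg).le]
    linear_combination -κ * Real.cosh_sq_sub_sinh_sq (√(-κ) * t)
  · obtain rfl : κ = 0 := by linarith [not_lt.mp hpos, not_lt.mp hneg]
    simp

lemma hasDerivAt_tanK {t : ℝ} (hc : cosK κ t ≠ 0) :
    HasDerivAt (tanK κ) (1 + κ * tanK κ t ^ 2) t := by
  refine ((hasDerivAt_sinK κ t).div (hasDerivAt_cosK κ t) hc).congr_deriv ?_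
  rw [tanK]
  field_simp
  ring

lemma cosK_sq_mul_one_add_mul_tanK_sq {t : ℝ} (hc : cosK κ t ≠ 0) :
    cosK κ t ^ 2 * (1 + κ * tanK κ t ^ 2) = 1 := by
  rw [tanK]
  field_simp
  linear_combination cosK_sq_add_mul_sinK_sq κ t

lemma sinK_two_mul (κ t : ℝ) : sinK κ (2 * t) = 2 * sinK κ t * cosK κ t := by
  unfold sinK cosK
  split_ifs with hpos hneg
  · rw [mul_left_comm, Real.sin_two_mul]; ring
  · rw [mul_left_comm, Real.sinh_two_mul]; ring
  · ring

lemma sinK_two_mul_eq_tanK {t : ℝ} (hc : cosK κ t ≠ 0) :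
    sinK κ (2 * t) = 2 * tanK κ t / (1 + κ * tanK κ t ^ 2) := by
  have hden : 1 + κ * tanK κ t ^ 2 ≠ 0 :=
    right_ne_zero_of_mul_eq_one (cosK_sq_mul_one_add_mul_tanK_sq hc)
  rw [sinK_two_mul, eq_div_iff hden, tanK]
  field_simp
  linear_combination sinK κ t * cosK_sq_add_mul_sinK_sq κ t

lemma sinK_pos {s : ℝ} (hs : 0 < s) (hκ : 0 < κ → s < π / √κ) : 0 < sinK κ s := by
  unfold sinK
  split_ifs with hpos hneg
  · have hsqrt := Real.sqrt_pos.mpr hpos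
    refine div_pos (Real.sin_pos_of_pos_of_lt_pi (by positivity) ?_) hsqrt
    rw [← lt_div_iff₀' hsqrt]
    exact hκ hpos
  · have hsqrt := Real.sqrt_pos.mpr (neg_pos.mpr hneg)
    exact div_pos (Real.sinh_pos_iff.mpr (by positivity)) hsqrt
  · exact hs

lemma cosK_pos {s : ℝ} (hκ : 0 < κ → 2 * |s| < π / √κ) : 0 < cosK κ s := by
  unfold cosK
  split_ifs with hpos
  · have hsqrt := Real.sqrt_pos.mpr hpos
    have h := hκ hpos
    rw [lt_div_iff₀ hsqrt] at h
    refine Real.cos_pos_of_mem_Ioo ⟨?_, ?_⟩ <;>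
      nlinarith [neg_abs_le s, le_abs_self s]
  · exact Real.cosh_pos _
  · exact one_pos

end ModelTrigonometry

section ModelArctangent

variable {κ x : ℝ}

lemma hasDerivAt_artanh {y : ℝ} (hy : 1 - y ^ 2 ≠ 0) :
    HasDerivAt _root_.artanh (1 / (1 - y ^ 2)) y := by
  obtain ⟨hy_add, hy_sub⟩ : 1 + y ≠ 0 ∧ 1 - y ≠ 0 :=
    mul_ne_zero_iff.mp (by convert hy using 1; ring)
  refine ((((hasDerivAt_id' y).const_add 1).div ((hasDerivAt_id' y).const_sub 1) hy_sub).log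
    (div_ne_zero hy_add hy_sub)).div_const 2 |>.congr_deriv ?_
  simp only [Pi.div_apply]
  field_simp
  ring

lemma hasDerivAt_arctanK (hx : 1 + κ * x ^ 2 ≠ 0) :
    HasDerivAt (arctanK κ) (1 / (1 + κ * x ^ 2)) x := by
  unfold arctanK
  split_ifs with hpos hneg
  · have hs : √κ ≠ 0 := (Real.sqrt_pos.mpr hpos).ne'
    refine (((hasDerivAt_id' x).const_mul √κ).arctan.div_const √κ).congr_deriv ?_
    rw [mul_pow, Real.sq_sqrt hpos.le]
    field_simp
  · have hs : √(-κ) ≠ 0 := (Real.sqrt_pos.mpr (neg_pos.mpr hneg)).ne'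
    have hy : 1 - (√(-κ) * x) ^ 2 = 1 + κ * x ^ 2 := by
      rw [mul_pow, Real.sq_sqrt (neg_pos.mpr hneg).le]; ring
    have hderiv := (hasDerivAt_artanh (hy ▸ hx)).comp x ((hasDerivAt_id' x).const_mul √(-κ))
    refine (hderiv.div_const √(-κ)).congr_deriv ?_
    rw [hy]
    field_simp
  · obtain rfl : κ = 0 := by linarith [not_lt.mp hpos, not_lt.mp hneg]
    simpa using hasDerivAt_id' x

lemma cosK_arctanK_pos (κ x : ℝ) : 0 < cosK κ (arctanK κ x) := by
  unfold cosK arctanK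
  split_ifs with hpos hneg
  · rw [mul_div_cancel₀ _ (Real.sqrt_pos.mpr hpos).ne']
    exact Real.cos_arctan_pos _
  · exact Real.cosh_pos _
  · exact one_pos

lemma tanK_arctanK (hx : 0 < 1 + κ * x ^ 2) : tanK κ (arctanK κ x) = x := by
  unfold tanK sinK cosK arctanK
  split_ifs with hpos hneg
  · have hs : √κ ≠ 0 := (Real.sqrt_pos.mpr hpos).ne'
    rw [mul_div_cancel₀ _ hs, div_right_comm, ← Real.tan_eq_sin_div_cos, Real.tan_arctan]
    field_simp
  · have hs : √(-κ) ≠ 0 := (Real.sqrt_pos.mpr (neg_pos.mpr hneg)).ne'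
    have hy : √(-κ) * x ∈ Set.Ioo (-1) 1 := by
      rw [Set.mem_Ioo, ← abs_lt, ← sq_lt_one_iff_abs_lt_one, mul_pow,
        Real.sq_sqrt (neg_pos.mpr hneg).le]
      linarith
    have hartanh : _root_.artanh (√(-κ) * x) = Real.artanh (√(-κ) * x) := by
      rw [Real.artanh_eq_half_log (Set.Ioo_subset_Icc_self hy), _root_.artanh]; ring
    rw [mul_div_cancel₀ _ hs, hartanh, div_right_comm, ← Real.tanh_eq_sinh_div_cosh,
      Real.tanh_artanh hy]
    field_simp
  · exact div_one x

lemma sinK_two_mul_arctanK (hx : 0 < 1 + κ * x ^ 2) :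
    sinK κ (2 * arctanK κ x) = 2 * x / (1 + κ * x ^ 2) := by
  rw [sinK_two_mul_eq_tanK (cosK_arctanK_pos κ x).ne', tanK_arctanK hx]

lemma one_add_mul_sq_pos {x : ℝ} (hx₀ : 0 ≤ x) (hx : κ < 0 → x < 1 / √(-κ)) :
    0 < 1 + κ * x ^ 2 := by
  rcases lt_or_ge κ 0 with hneg | hnonneg
  · have hsqrt := Real.sqrt_pos.mpr (neg_pos.mpr hneg)
    have h := hx hneg
    rw [lt_div_iff₀ hsqrt] at h
    have hsq : (x * √(-κ)) ^ 2 < 1 := pow_lt_one₀ (by positivity) h two_ne_zero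
    rw [mul_pow, Real.sq_sqrt (neg_pos.mpr hneg).le] at hsq
    linarith
  · positivity

end ModelArctangent

section ConformalRadius

variable {ρ κ σ t : ℝ}

noncomputable def conformalRadius (ρ κ σ t : ℝ) : ℝ := 2 * arctanK κ (σ * tanK ρ (t / 2))

lemma conformalRadius_zero (ρ κ σ : ℝ) : conformalRadius ρ κ σ 0 = 0 := by
  simp [conformalRadius, tanK_zero, arctanK_zero]

lemma hasDerivAt_conformalRadius (hc : cosK ρ (t / 2) ≠ 0)
    (hx : 1 + κ * (σ * tanK ρ (t / 2)) ^ 2 ≠ 0) :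
    HasDerivAt (conformalRadius ρ κ σ)
      (σ * (1 + ρ * tanK ρ (t / 2) ^ 2) / (1 + κ * (σ * tanK ρ (t / 2)) ^ 2)) t := by
  have htan := (hasDerivAt_tanK hc).comp t ((hasDerivAt_id' t).div_const 2)
  refine ((hasDerivAt_arctanK hx).comp t (htan.const_mul σ)).const_mul 2 |>.congr_deriv ?_
  field_simp

lemma sinK_conformalRadius_div_sinK (hc : cosK ρ (t / 2) ≠ 0) (hu : tanK ρ (t / 2) ≠ 0)
    (hx : 0 < 1 + κ * (σ * tanK ρ (t / 2)) ^ 2) :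
    sinK κ (conformalRadius ρ κ σ t) / sinK ρ t =
      σ * (1 + ρ * tanK ρ (t / 2) ^ 2) / (1 + κ * (σ * tanK ρ (t / 2)) ^ 2) := by
  have hsin := sinK_two_mul_eq_tanK hc
  rw [mul_div_cancel₀ t two_ne_zero] at hsin
  have hden := right_ne_zero_of_mul_eq_one (cosK_sq_mul_one_add_mul_tanK_sq hc)
  rw [conformalRadius, sinK_two_mul_arctanK hx, hsin]
  field_simp

end ConformalRadius

/-- The distance function `R(t) = 2·arctan_κ(σ·tan_ρ(t/2))` of the conformal
azimuthal map with radial derivative `σ` at the center: it satisfies the ODE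
`R'(t) = sin_κ(R(t))/sin_ρ(t)` at every admissible `t > 0`, and `R(t)/t → σ`
as `t → 0⁺`. -/
theorem conformal_azimuthal_distance_function (ρ κ σ : ℝ) (hσ : 0 < σ) :
    (∀ t : ℝ, 0 < t → (0 < ρ → t < Real.pi / Real.sqrt ρ) →
      (κ < 0 → σ * tanK ρ (t / 2) < 1 / Real.sqrt (-κ)) →
      HasDerivAt (fun s : ℝ => 2 * arctanK κ (σ * tanK ρ (s / 2)))
        (sinK κ (2 * arctanK κ (σ * tanK ρ (t / 2))) / sinK ρ t) t) ∧
    Filter.Tendsto (fun t : ℝ => 2 * arctanK κ (σ * tanK ρ (t / 2)) / t)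
      (nhdsWithin 0 (Set.Ioi 0)) (nhds σ) := by
  constructor
  · intro t ht htρ htκ
    have hcos : 0 < cosK ρ (t / 2) :=
      cosK_pos fun hρ ↦ by
        rw [abs_of_pos (half_pos ht), mul_div_cancel₀ t two_ne_zero]; exact htρ hρ
    have htan : 0 < tanK ρ (t / 2) :=
      div_pos (sinK_pos (half_pos ht) fun hρ ↦ by linarith [htρ hρ]) hcos
    have hx := one_add_mul_sq_pos (mul_pos hσ htan).le htκ
    rw [← conformalRadius, sinK_conformalRadius_div_sinK hcos.ne' htan.ne' hx]
    exact hasDerivAt_conformalRadius hcos.ne' hx.ne'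
  · have hderiv : HasDerivAt (conformalRadius ρ κ σ) σ 0 := by
      simpa [tanK_zero] using
        hasDerivAt_conformalRadius (ρ := ρ) (κ := κ) (σ := σ) (t := 0) (by simp [cosK_zero])
          (by simp [tanK_zero])
    refine hderiv.tendsto_slope_zero_right.congr fun t ↦ ?_
    rw [zero_add, conformalRadius_zero, sub_zero, smul_eq_mul, inv_mul_eq_div, conformalRadius]
end

section
/- For every integer n ≥ 2 and all real numbers κ′ ≤ κ, one has I_{κ′}(v) ≥ I_κ(v) for every v > 0 lying in the ranges of both V_{κ′} and V_κ; that is, the model isoperimetric profile is pointwise non-increasing as a function of the curvature parameter κ. -/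
open Real MeasureTheory Filter Asymptotics

/-!
Let `V_κ t = v` and `s = sin_κ t`, so that `I_κ v = ω s ^ (n - 1)`. The volume
`W_κ s = V_κ (arcsin_κ s)` of the small ball bounded by a sphere of area `ω s ^ (n - 1)` has
derivative `ω s ^ (n - 1) / √(1 - κ s²)` in `s`, which increases with `κ`; hence `W_κ' ≤ W_κ`.
The radii `t'` with `sin_κ' t' ≥ s` are those with `W_κ' s ≤ V_κ' t'` and, if `κ' > 0`, also
`V_κ' t' + W_κ' s ≤ V_κ' (π / √κ')`. Both hold for the `t'` with `V_κ' t' = v`: the first because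
`W_κ' s ≤ W_κ s ≤ v`, the second because the total volume `V_κ (π / √κ)` of the round sphere
decreases with `κ`.
-/

/-- The inverse of `sinK κ` on `[0, π / (2√κ)]` if `κ > 0`, and on all of `ℝ` otherwise. -/
noncomputable def arcsinK (κ x : ℝ) : ℝ :=
  if 0 < κ then arcsin (√κ * x) / √κ
  else if κ < 0 then arsinh (√(-κ) * x) / √(-κ)
  else x

section SinK

variable {κ : ℝ}

lemma sinK_of_pos (hκ : 0 < κ) (t : ℝ) : sinK κ t = sin (√κ * t) / √κ := if_pos hκ

@[fun_prop]
lemma continuous_sinK (κ : ℝ) : Continuous (sinK κ) := by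
  unfold sinK; split_ifs <;> fun_prop

lemma sinK_pos_s9 {t : ℝ} (ht : 0 < t) (htκ : 0 < κ → t < π / √κ) : 0 < sinK κ t := by
  unfold sinK; split_ifs with hpos hneg
  · have hs : 0 < √κ := sqrt_pos.2 hpos
    refine div_pos (sin_pos_of_pos_of_lt_pi (by positivity) ?_) hs
    rw [← lt_div_iff₀' hs]
    exact htκ hpos
  · exact div_pos (sinh_pos_iff.2 (mul_pos (sqrt_pos.2 (neg_pos.2 hneg)) ht))
      (sqrt_pos.2 (neg_pos.2 hneg))
  · exact ht

lemma mem_domK {t : ℝ} : t ∈ domK κ ↔ 0 ≤ t ∧ (0 < κ → t < π / √κ) := by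
  unfold domK; split_ifs with h <;> simp [h]

def domKClosure (κ : ℝ) : Set ℝ := {t | 0 ≤ t ∧ (0 < κ → t ≤ π / √κ)}

lemma domK_subset_domKClosure : domK κ ⊆ domKClosure κ := fun _ ht ↦
  ⟨(mem_domK.1 ht).1, fun hκ ↦ ((mem_domK.1 ht).2 hκ).le⟩

lemma sinK_nonneg {t : ℝ} (ht : t ∈ domKClosure κ) : 0 ≤ sinK κ t := by
  obtain ⟨ht₀, htκ⟩ := ht
  unfold sinK; split_ifs with hpos hneg
  · have hs : 0 < √κ := sqrt_pos.2 hpos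
    refine div_nonneg (sin_nonneg_of_nonneg_of_le_pi (by positivity) ?_) hs.le
    rw [← le_div_iff₀' hs]
    exact htκ hpos
  · exact div_nonneg (sinh_nonneg_iff.2 (by positivity)) (sqrt_nonneg _)
  · exact ht₀

lemma mul_sinK_sq_le_one (κ t : ℝ) : κ * sinK κ t ^ 2 ≤ 1 := by
  rcases le_or_gt κ 0 with hκ | hκ
  · nlinarith [sq_nonneg (sinK κ t)]
  · rw [sinK_of_pos hκ, div_pow, sq_sqrt hκ.le, mul_div_cancel₀ _ hκ.ne']
    exact sin_sq_le_one _

lemma monotone_sinK_of_nonpos (hκ : κ ≤ 0) : Monotone (sinK κ) := by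
  intro a b hab
  unfold sinK; split_ifs with hpos
  · exact absurd hpos hκ.not_gt
  · exact div_le_div_of_nonneg_right (sinh_le_sinh.2 (by gcongr)) (sqrt_nonneg _)
  · exact hab

lemma sinK_pi_div_sqrt_sub (hκ : 0 < κ) (t : ℝ) : sinK κ (π / √κ - t) = sinK κ t := by
  rw [sinK_of_pos hκ, sinK_of_pos hκ, mul_sub, mul_div_cancel₀ _ (sqrt_pos.2 hκ).ne',
    sin_pi_sub]

lemma sin_le_sin_of_le_of_le_pi_sub {a y : ℝ} (ha₀ : 0 ≤ a) (ha : a ≤ π / 2) (hay : a ≤ y)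
    (hya : y ≤ π - a) : sin a ≤ sin y := by
  rcases le_total y (π / 2) with hy | hy
  · exact strictMonoOn_sin.monotoneOn ⟨by linarith, ha⟩ ⟨by linarith, hy⟩ hay
  · rw [← sin_pi_sub y]
    exact strictMonoOn_sin.monotoneOn ⟨by linarith, ha⟩ ⟨by linarith, by linarith⟩ (by linarith)

lemma sinK_le_sinK_of_le_of_le_sub (hκ : 0 < κ) {a t : ℝ} (ha₀ : 0 ≤ a) (ha : a ≤ π / 2 / √κ)
    (hat : a ≤ t) (hta : t ≤ π / √κ - a) : sinK κ a ≤ sinK κ t := by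
  have hs : 0 < √κ := sqrt_pos.2 hκ
  rw [sinK_of_pos hκ, sinK_of_pos hκ]
  gcongr
  apply sin_le_sin_of_le_of_le_pi_sub (by positivity) ((le_div_iff₀' hs).1 ha) (by gcongr)
  calc √κ * t ≤ √κ * (π / √κ - a) := by gcongr
    _ = π - √κ * a := by rw [mul_sub, mul_div_cancel₀ _ hs.ne']

end SinK

section ArcsinK

variable {κ : ℝ}

lemma arcsinK_zero (κ : ℝ) : arcsinK κ 0 = 0 := by
  unfold arcsinK; split_ifs <;> simp

@[fun_prop]
lemma continuous_arcsinK (κ : ℝ) : Continuous (arcsinK κ) := by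
  unfold arcsinK; split_ifs
  · exact (continuous_arcsin.comp (continuous_const_mul _)).div_const _
  · exact (continuous_arsinh.comp (continuous_const_mul _)).div_const _
  · exact continuous_id

lemma arcsinK_nonneg {x : ℝ} (hx : 0 ≤ x) : 0 ≤ arcsinK κ x := by
  unfold arcsinK; split_ifs
  · exact div_nonneg (arcsin_nonneg.2 (by positivity)) (sqrt_nonneg _)
  · exact div_nonneg (arsinh_nonneg_iff.2 (by positivity)) (sqrt_nonneg _)
  · exact hx

lemma arcsinK_le_pi_div_two_div (hκ : 0 < κ) (x : ℝ) : arcsinK κ x ≤ π / 2 / √κ := by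
  unfold arcsinK
  rw [if_pos hκ]
  gcongr
  exact arcsin_le_pi_div_two _

lemma sinK_arcsinK {x : ℝ} (hx : 0 ≤ x) (hxκ : κ * x ^ 2 ≤ 1) : sinK κ (arcsinK κ x) = x := by
  unfold sinK arcsinK; split_ifs with hpos hneg
  · have hs : √κ ≠ 0 := (sqrt_pos.2 hpos).ne'
    have hle : √κ * x ≤ 1 := by rwa [← sqrt_sq hx, ← sqrt_mul hpos.le, sqrt_le_one]
    rw [mul_div_cancel₀ _ hs, sin_arcsin (by nlinarith [sqrt_nonneg κ]) hle,
      mul_div_cancel_left₀ _ hs]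
  · have hs : √(-κ) ≠ 0 := (sqrt_pos.2 (neg_pos.2 hneg)).ne'
    rw [mul_div_cancel₀ _ hs, sinh_arsinh, mul_div_cancel_left₀ _ hs]
  · rfl

lemma arcsinK_sinK_of_nonpos (hκ : κ ≤ 0) (t : ℝ) : arcsinK κ (sinK κ t) = t := by
  unfold sinK arcsinK; split_ifs with hpos hneg
  · exact absurd hpos hκ.not_gt
  · have hs : √(-κ) ≠ 0 := (sqrt_pos.2 (neg_pos.2 hneg)).ne'
    rw [mul_div_cancel₀ _ hs, arsinh_sinh, mul_div_cancel_left₀ _ hs]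
  · rfl

lemma arcsin_sin_le_min {x : ℝ} (hx₀ : 0 ≤ x) (hxπ : x ≤ π) : arcsin (sin x) ≤ min x (π - x) := by
  rcases le_total x (π / 2) with h | h
  · rw [arcsin_sin (by linarith [pi_pos]) h]
    exact le_min le_rfl (by linarith)
  · rw [← sin_pi_sub, arcsin_sin (by linarith) (by linarith)]
    exact le_min (by linarith) le_rfl

lemma arcsinK_sinK_le_min (hκ : 0 < κ) {t : ℝ} (ht₀ : 0 ≤ t) (htκ : t ≤ π / √κ) :
    arcsinK κ (sinK κ t) ≤ min t (π / √κ - t) := by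
  have hs : 0 < √κ := sqrt_pos.2 hκ
  unfold arcsinK
  rw [if_pos hκ, sinK_of_pos hκ, mul_div_cancel₀ _ hs.ne', div_le_iff₀ hs,
    min_mul_of_nonneg _ _ hs.le, sub_mul, div_mul_cancel₀ _ hs.ne', mul_comm t]
  exact arcsin_sin_le_min (by positivity) ((le_div_iff₀' hs).1 htκ)

lemma hasDerivAt_arcsinK {x : ℝ} (hx : 0 ≤ x) (hxκ : κ * x ^ 2 < 1) :
    HasDerivAt (arcsinK κ) (1 / √(1 - κ * x ^ 2)) x := by
  unfold arcsinK
  split_ifs with hpos hneg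
  · have hs : 0 < √κ := sqrt_pos.2 hpos
    have hlt : √κ * x < 1 := by
      rwa [← sqrt_sq hx, ← sqrt_mul hpos.le, sqrt_lt' one_pos, one_pow]
    have h := ((hasDerivAt_arcsin (by nlinarith) hlt.ne).comp x
      ((hasDerivAt_id x).const_mul √κ)).div_const √κ
    refine h.congr_deriv ?_
    rw [mul_pow, sq_sqrt hpos.le]
    field_simp
  · have hs : 0 < √(-κ) := sqrt_pos.2 (neg_pos.2 hneg)
    have h := ((hasDerivAt_arsinh _).comp x ((hasDerivAt_id x).const_mul √(-κ))).div_const √(-κ)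
    refine h.congr_deriv ?_
    rw [id, mul_pow, sq_sqrt (neg_pos.2 hneg).le, neg_mul, ← sub_eq_add_neg]
    field_simp
  · obtain rfl : κ = 0 := le_antisymm (not_lt.1 hpos) (not_lt.1 hneg)
    exact (hasDerivAt_id' x).congr_deriv (by simp)

lemma arcsinK_mem_domKClosure {x : ℝ} (hx : 0 ≤ x) : arcsinK κ x ∈ domKClosure κ :=
  ⟨arcsinK_nonneg hx, fun hκ ↦ (arcsinK_le_pi_div_two_div hκ x).trans
    (div_le_div_of_nonneg_right (half_le_self pi_pos.le) (sqrt_nonneg κ))⟩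

lemma pi_div_sqrt_sub_arcsinK_mem_domKClosure (hκ : 0 < κ) {x : ℝ} (hx : 0 ≤ x) :
    π / √κ - arcsinK κ x ∈ domKClosure κ :=
  have ha := arcsinK_mem_domKClosure (κ := κ) hx
  ⟨sub_nonneg.2 (ha.2 hκ), fun _ ↦ sub_le_self _ ha.1⟩

end ArcsinK

section VK

variable {n : ℕ} {κ : ℝ}

lemma omegaS_nonneg (n : ℕ) : 0 ≤ omegaS n := by
  unfold omegaS; positivity

lemma omegaS_pos (hn : 0 < n) : 0 < omegaS n :=
  mul_pos (Nat.cast_pos.2 hn) (ENNReal.toReal_pos (Metric.measure_ball_pos volume 0 one_pos).ne'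
    measure_ball_lt_top.ne)

lemma VK_zero (n : ℕ) (κ : ℝ) : VK n κ 0 = 0 := by
  simp [VK]

lemma intervalIntegrable_sinK_pow (n : ℕ) (κ a b : ℝ) :
    IntervalIntegrable (fun s ↦ sinK κ s ^ n) volume a b :=
  ((continuous_sinK κ).pow n).intervalIntegrable a b

lemma hasDerivAt_VK (n : ℕ) (κ t : ℝ) : HasDerivAt (VK n κ) (AK n κ t) t :=
  (((continuous_sinK κ).pow (n - 1)).integral_hasStrictDerivAt 0 t).hasDerivAt.const_mul _

@[fun_prop]
lemma continuous_VK (n : ℕ) (κ : ℝ) : Continuous (VK n κ) :=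
  continuous_iff_continuousAt.2 fun t ↦ (hasDerivAt_VK n κ t).continuousAt

lemma strictMonoOn_VK (hn : 0 < n) (κ : ℝ) :
    StrictMonoOn (VK n κ) (domKClosure κ) := by
  rintro a ⟨ha, -⟩ b ⟨-, hbκ⟩ hab
  have hpos : 0 < ∫ s in a..b, sinK κ s ^ (n - 1) :=
    intervalIntegral.intervalIntegral_pos_of_pos_on (intervalIntegrable_sinK_pow _ κ a b)
      (fun x hx ↦ pow_pos (sinK_pos_s9 (ha.trans_lt hx.1) fun hκ ↦ hx.2.trans_le (hbκ hκ)) _) hab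
  unfold VK
  rw [← intervalIntegral.integral_add_adjacent_intervals (intervalIntegrable_sinK_pow _ κ 0 a)
    (intervalIntegrable_sinK_pow _ κ a b), mul_add]
  exact lt_add_of_pos_right _ (mul_pos (omegaS_pos hn) hpos)

lemma VKinv_VK (hn : 0 < n) {t : ℝ} (ht : t ∈ domK κ) : VKinv n κ (VK n κ t) = t := by
  have hinj := (strictMonoOn_VK hn κ).injOn
  have hset : {s | s ∈ domK κ ∧ VK n κ s = VK n κ t} = {t} := by
    ext s
    refine ⟨fun ⟨hs, hst⟩ ↦ hinj (domK_subset_domKClosure hs) (domK_subset_domKClosure ht) hst, ?_⟩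
    rintro rfl
    exact ⟨ht, rfl⟩
  rw [VKinv, hset, csInf_singleton]

lemma VK_pi_div_sqrt_sub (hκ : 0 < κ) (t : ℝ) :
    VK n κ (π / √κ - t) = VK n κ (π / √κ) - VK n κ t := by
  have hsymm : ∫ s in (0 : ℝ)..t, sinK κ s ^ (n - 1)
      = ∫ s in (π / √κ - t)..(π / √κ), sinK κ s ^ (n - 1) := by
    have := intervalIntegral.integral_comp_sub_left (fun s ↦ sinK κ s ^ (n - 1)) (a := 0) (b := t)
      (π / √κ)
    simpa only [sinK_pi_div_sqrt_sub hκ, sub_zero] using this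
  have hadd := intervalIntegral.integral_add_adjacent_intervals
    (intervalIntegrable_sinK_pow (n - 1) κ 0 (π / √κ - t))
    (intervalIntegrable_sinK_pow _ κ _ (π / √κ))
  unfold VK
  rw [hsymm, ← hadd]
  ring

lemma VK_pi_div_sqrt (hn : 0 < n) (hκ : 0 < κ) :
    VK n κ (π / √κ) = (√κ)⁻¹ ^ n * (omegaS n * ∫ u in (0 : ℝ)..π, sin u ^ (n - 1)) := by
  have hs : √κ ≠ 0 := (sqrt_pos.2 hκ).ne'
  obtain ⟨m, rfl⟩ : ∃ m, n = m + 1 := ⟨n - 1, by omega⟩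
  unfold VK
  simp only [sinK_of_pos hκ, div_pow, Nat.add_sub_cancel]
  rw [intervalIntegral.integral_div, intervalIntegral.integral_comp_mul_left (fun u ↦ sin u ^ m) hs,
    mul_zero, mul_div_cancel₀ _ hs, smul_eq_mul, inv_pow, pow_succ]
  field_simp

lemma VK_pi_div_sqrt_le_of_le (hn : 0 < n) {κ' : ℝ} (hκ' : 0 < κ') (h : κ' ≤ κ) :
    VK n κ (π / √κ) ≤ VK n κ' (π / √κ') := by
  rw [VK_pi_div_sqrt hn hκ', VK_pi_div_sqrt hn (hκ'.trans_le h)]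
  have hI : 0 ≤ ∫ u in (0 : ℝ)..π, sin u ^ (n - 1) :=
    intervalIntegral.integral_nonneg pi_pos.le fun u hu ↦ pow_nonneg (sin_nonneg_of_mem_Icc hu) _
  have := omegaS_nonneg n
  gcongr

end VK

section Comparison

variable {n : ℕ} {κ : ℝ}

lemma hasDerivAt_VK_arcsinK {x : ℝ} (hx : 0 ≤ x) (hxκ : κ * x ^ 2 < 1) :
    HasDerivAt (fun y ↦ VK n κ (arcsinK κ y)) (omegaS n * x ^ (n - 1) / √(1 - κ * x ^ 2)) x := by
  have h := (hasDerivAt_VK n κ (arcsinK κ x)).comp x (hasDerivAt_arcsinK hx hxκ)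
  rwa [AK, sinK_arcsinK hx hxκ.le, mul_one_div] at h

lemma VK_arcsinK_le_of_le {κ' : ℝ} (h : κ' ≤ κ) {x : ℝ} (hx : 0 ≤ x) (hxκ : κ * x ^ 2 ≤ 1) :
    VK n κ' (arcsinK κ' x) ≤ VK n κ (arcsinK κ x) := by
  have hκy : ∀ y ∈ Set.Ioo 0 x, κ' * y ^ 2 ≤ κ * y ^ 2 ∧ κ * y ^ 2 < 1 := fun y hy ↦
    ⟨by nlinarith [sq_nonneg y], by
      rcases le_or_gt κ 0 with hκ | hκ
      · nlinarith [sq_nonneg y]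
      · nlinarith [mul_lt_mul_of_pos_left (pow_lt_pow_left₀ hy.2 hy.1.le two_ne_zero) hκ]⟩
  let g y := VK n κ (arcsinK κ y) - VK n κ' (arcsinK κ' y)
  have hderiv : ∀ y ∈ Set.Ioo 0 x, HasDerivAt g
      (omegaS n * y ^ (n - 1) / √(1 - κ * y ^ 2) - omegaS n * y ^ (n - 1) / √(1 - κ' * y ^ 2)) y :=
    fun y hy ↦ (hasDerivAt_VK_arcsinK hy.1.le (hκy y hy).2).sub
      (hasDerivAt_VK_arcsinK hy.1.le ((hκy y hy).1.trans_lt (hκy y hy).2))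
  have hmono : MonotoneOn g (Set.Icc 0 x) := by
    refine monotoneOn_of_hasDerivWithinAt_nonneg (convex_Icc 0 x) (by fun_prop)
      (fun y hy ↦ (hderiv y (by rwa [interior_Icc] at hy)).hasDerivWithinAt) fun y hy ↦ ?_
    rw [interior_Icc] at hy
    obtain ⟨hκ'κ, hκ⟩ := hκy y hy
    have := omegaS_nonneg n
    have := hy.1.le
    rw [sub_nonneg]
    gcongr
  have := hmono (Set.left_mem_Icc.2 hx) (Set.right_mem_Icc.2 hx) hx
  simpa [g, arcsinK_zero, VK_zero] using this

end Comparison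

section LevelSets

variable {n : ℕ} {κ : ℝ}

lemma VK_arcsinK_sinK_le (hn : 0 < n) {t : ℝ} (ht : t ∈ domKClosure κ) :
    VK n κ (arcsinK κ (sinK κ t)) ≤ VK n κ t := by
  rcases le_or_gt κ 0 with hκ | hκ
  · rw [arcsinK_sinK_of_nonpos hκ]
  · have ha := arcsinK_sinK_le_min hκ ht.1 (ht.2 hκ)
    exact (strictMonoOn_VK hn κ).monotoneOn (arcsinK_mem_domKClosure (sinK_nonneg ht)) ht
      (ha.trans (min_le_left _ _))

/-- On the round sphere, the ball of radius `t` and the small ball bounded by a sphere of the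
same area are disjoint. -/
lemma VK_add_VK_arcsinK_sinK_le (hn : 0 < n) (hκ : 0 < κ) {t : ℝ} (ht : t ∈ domKClosure κ) :
    VK n κ t + VK n κ (arcsinK κ (sinK κ t)) ≤ VK n κ (π / √κ) := by
  have ha := min_le_right _ _ |>.trans' (arcsinK_sinK_le_min hκ ht.1 (ht.2 hκ))
  have hle := (strictMonoOn_VK hn κ).monotoneOn ht
    (pi_div_sqrt_sub_arcsinK_mem_domKClosure hκ (sinK_nonneg ht)) (by linarith)
  rw [VK_pi_div_sqrt_sub hκ] at hle
  linarith

lemma le_sinK_of_VK_arcsinK_le (hn : 0 < n) {s t : ℝ} (hs : 0 ≤ s) (hsκ : κ * s ^ 2 ≤ 1)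
    (ht : t ∈ domKClosure κ) (hlow : VK n κ (arcsinK κ s) ≤ VK n κ t)
    (hup : 0 < κ → VK n κ t + VK n κ (arcsinK κ s) ≤ VK n κ (π / √κ)) :
    s ≤ sinK κ t := by
  have hmono := strictMonoOn_VK hn κ
  have hat : arcsinK κ s ≤ t := (hmono.le_iff_le (arcsinK_mem_domKClosure hs) ht).1 hlow
  rw [← sinK_arcsinK hs hsκ]
  rcases le_or_gt κ 0 with hκ | hκ
  · exact monotone_sinK_of_nonpos hκ hat
  · have hta : t ≤ π / √κ - arcsinK κ s := by
      rw [← hmono.le_iff_le ht (pi_div_sqrt_sub_arcsinK_mem_domKClosure hκ hs),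
        VK_pi_div_sqrt_sub hκ]
      linarith [hup hκ]
    exact sinK_le_sinK_of_le_of_le_sub hκ (arcsinK_nonneg hs) (arcsinK_le_pi_div_two_div hκ s)
      hat hta

end LevelSets

/-- The model isoperimetric profile is pointwise non-increasing in the curvature
parameter: if `κ' ≤ κ` then `I_{κ'}(v) ≥ I_κ(v)` for every `v > 0` lying in the
ranges of both `V_{κ'}` and `V_κ`. -/
theorem isoperimetric_profile_antitone_in_curvature (n : ℕ) (hn : 2 ≤ n)
    (κ' κ : ℝ) (h : κ' ≤ κ) :
    ∀ v : ℝ, 0 < v → v ∈ rangeVK n κ' → v ∈ rangeVK n κ →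
      IK n κ v ≤ IK n κ' v := by
  rintro v - ⟨t', ht', rfl⟩ ⟨t, ht, htv⟩
  have hn₀ : 0 < n := by omega
  rw [IK, IK, VKinv_VK hn₀ ht', ← htv, VKinv_VK hn₀ ht]
  replace ht := domK_subset_domKClosure ht
  set s := sinK κ t
  have hs : 0 ≤ s := sinK_nonneg ht
  have hsκ : κ * s ^ 2 ≤ 1 := mul_sinK_sq_le_one κ t
  have hsκ' : κ' * s ^ 2 ≤ 1 := (mul_le_mul_of_nonneg_right h (sq_nonneg s)).trans hsκ
  have hsinK : s ≤ sinK κ' t' := by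
    refine le_sinK_of_VK_arcsinK_le hn₀ hs hsκ' (domK_subset_domKClosure ht') ?_ fun hκ' ↦ ?_
    · calc VK n κ' (arcsinK κ' s) ≤ VK n κ (arcsinK κ s) := VK_arcsinK_le_of_le h hs hsκ
        _ ≤ VK n κ t := VK_arcsinK_sinK_le hn₀ ht
        _ = VK n κ' t' := htv
    · calc VK n κ' t' + VK n κ' (arcsinK κ' s) ≤ VK n κ t + VK n κ (arcsinK κ s) := by
            rw [htv]; gcongr; exact VK_arcsinK_le_of_le h hs hsκ
        _ ≤ VK n κ (π / √κ) := VK_add_VK_arcsinK_sinK_le hn₀ (hκ'.trans_le h) ht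
        _ ≤ VK n κ' (π / √κ') := VK_pi_div_sqrt_le_of_le hn₀ hκ' h
  exact mul_le_mul_of_nonneg_left (pow_le_pow_left₀ hs hsinK _) (omegaS_nonneg n)
end

section
/- Let κ > 0 and T > 0. The function f(σ) = |log σ| + log(2σT/(1 + κσ²T²)) attains a strict global minimum on (0, ∞) at σ = 1, with minimal value f(1) = log(2T/(1 + κT²)). -/
/-- For `κ > 0` and `T > 0`, the function
`f(σ) = |log σ| + log(2σT/(1+κσ²T²))` attains a strict global minimum on `(0,∞)`
at `σ = 1`, with minimal value `f(1) = log(2T/(1+κT²))`. -/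
theorem strict_min_conformal_bound_positive_curvature (κ T : ℝ) (hκ : 0 < κ) (hT : 0 < T) :
    (|Real.log 1| + Real.log (2 * 1 * T / (1 + κ * 1 ^ 2 * T ^ 2))
      = Real.log (2 * T / (1 + κ * T ^ 2))) ∧
    ∀ σ : ℝ, 0 < σ → σ ≠ 1 →
      Real.log (2 * T / (1 + κ * T ^ 2)) <
        |Real.log σ| + Real.log (2 * σ * T / (1 + κ * σ ^ 2 * T ^ 2)) := by
  constructor
  · norm_num
  · intro σ hσ hne
    have hd1 : 0 < 1 + κ * T ^ 2 := by positivity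
    have hd2 : 0 < 1 + κ * σ ^ 2 * T ^ 2 := by positivity
    have hB : 0 < 2 * σ * T / (1 + κ * σ ^ 2 * T ^ 2) := by positivity
    rcases lt_or_gt_of_ne hne with h1 | h1
    · have hlog : Real.log σ < 0 := Real.log_neg hσ h1
      rw [abs_of_neg hlog, ← Real.log_inv, ← Real.log_mul (by positivity) (ne_of_gt hB)]
      apply Real.log_lt_log (by positivity)
      have heq : σ⁻¹ * (2 * σ * T / (1 + κ * σ ^ 2 * T ^ 2))
          = 2 * T / (1 + κ * σ ^ 2 * T ^ 2) := by
        field_simp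
      rw [heq]
      apply div_lt_div_of_pos_left (by positivity) hd2
      have : σ ^ 2 < 1 := by nlinarith
      nlinarith [mul_pos hκ (pow_pos hT 2)]
    · have hlog : 0 < Real.log σ := Real.log_pos h1
      rw [abs_of_pos hlog, ← Real.log_mul (by positivity) (ne_of_gt hB)]
      apply Real.log_lt_log (by positivity)
      have heq : σ * (2 * σ * T / (1 + κ * σ ^ 2 * T ^ 2))
          = 2 * σ ^ 2 * T / (1 + κ * σ ^ 2 * T ^ 2) := by
        field_simp
      rw [heq, div_lt_div_iff₀ hd1 hd2]
      have hσ2 : 1 < σ ^ 2 := by nlinarith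
      nlinarith [mul_pos (sub_pos.mpr hσ2) hT]
end
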